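/- arXiv:1311.0547 — 4 statements merged into one kernel-verified Lean document; each statement's English description precedes it below -/
import Mathlib

section
/- Let N be a finite set of positive integers with 1 ∈ N, closed under least common multiples, and let a : ℕ≥1 → ℝ be a sequence subordinated to N. Define b : ℕ≥1 → ℝ by b(κ) = (1/κ) · Σ_{d | κ} φ(κ/d) · a(d), the sum ranging over the positive divisors d of κ. Then b is also subordinated to N. -/
/-- A sequence `a` is subordinated to `N` if for every positive integer `κ`,
`a κ = a (q_N κ)` where `q_N κ` is the largest element of `N` dividing `κ`. -/
def Subordinated (N : Finset ℕ) (a : ℕ → ℝ) : Prop :=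
  ∀ κ, 0 < κ → ∀ q ∈ N, q ∣ κ → (∀ q' ∈ N, q' ∣ κ → q' ≤ q) → a κ = a q

/-- Grouping a sum over `range n` by gcd with `n`. -/
lemma sum_gcd_range (n : ℕ) (hn : 0 < n) (f : ℕ → ℝ) :
    ∑ k ∈ Finset.range n, f (n.gcd k) =
      ∑ d ∈ n.divisors, (Nat.totient (n / d) : ℝ) * f d := by
  rw [← Finset.sum_fiberwise_of_maps_to (g := fun k => n.gcd k) (t := n.divisors)
    (fun k _ => Nat.mem_divisors.2 ⟨Nat.gcd_dvd_left _ _, hn.ne'⟩)]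
  refine Finset.sum_congr rfl fun d hd => ?_
  rw [Nat.totient_div_of_dvd (Nat.dvd_of_mem_divisors hd)]
  rw [Finset.sum_congr rfl (fun k hk => by rw [(Finset.mem_filter.1 hk).2]),
    Finset.sum_const, nsmul_eq_mul]

/-- Periodicity: summing `f (gcd q k)` over `range (m * q)`. -/
lemma sum_gcd_periodic (q m : ℕ) (f : ℕ → ℝ) :
    ∑ k ∈ Finset.range (m * q), f (q.gcd k) =
      (m : ℝ) * ∑ k ∈ Finset.range q, f (q.gcd k) := by
  induction m with
  | zero => simp
  | succ m ih =>
    rw [Nat.succ_mul, Finset.sum_range_add, ih]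
    push_cast
    rw [add_mul, one_mul]
    congr 1
    refine Finset.sum_congr rfl fun k _ => ?_
    congr 1
    rw [add_comm, Nat.gcd_add_mul_right_right]

theorem stmt_6 (N : Finset ℕ) (hpos : ∀ q ∈ N, 0 < q) (h1 : 1 ∈ N)
    (hlcm : ∀ q ∈ N, ∀ q' ∈ N, Nat.lcm q q' ∈ N)
    (a : ℕ → ℝ) (ha : Subordinated N a)
    (b : ℕ → ℝ)
    (hb : ∀ κ, 0 < κ →
      b κ = (1 / (κ : ℝ)) * ∑ d ∈ κ.divisors, (Nat.totient (κ / d) : ℝ) * a d) :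
    Subordinated N b := by
  -- the "largest element of N dividing n" function
  have hne : ∀ n : ℕ, (N.filter (· ∣ n)).Nonempty := fun n =>
    ⟨1, Finset.mem_filter.2 ⟨h1, one_dvd n⟩⟩
  set qN : ℕ → ℕ := fun n => (N.filter (· ∣ n)).max' (hne n) with hqN
  have hqN_mem : ∀ n, qN n ∈ N := fun n =>
    (Finset.mem_filter.1 ((N.filter (· ∣ n)).max'_mem (hne n))).1
  have hqN_dvd : ∀ n, qN n ∣ n := fun n =>
    (Finset.mem_filter.1 ((N.filter (· ∣ n)).max'_mem (hne n))).2
  have hqN_max : ∀ n, ∀ q' ∈ N, q' ∣ n → q' ≤ qN n := fun n q' hq' hd =>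
    Finset.le_max' _ q' (Finset.mem_filter.2 (by exact ⟨hq', hd⟩))
  have haq : ∀ n, 0 < n → a n = a (qN n) := fun n hn =>
    ha n hn (qN n) (hqN_mem n) (hqN_dvd n) (hqN_max n)
  intro κ hκ q hqN' hqdvd hqmax
  have hq0 : 0 < q := hpos q hqN'
  -- every element of N dividing κ divides q
  have hdvdq : ∀ p ∈ N, p ∣ κ → p ∣ q := by
    intro p hp hpκ
    have hl : Nat.lcm p q ∈ N := hlcm p hp q hqN'
    have hlκ : Nat.lcm p q ∣ κ := Nat.lcm_dvd hpκ hqdvd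
    have h1 : Nat.lcm p q ≤ q := hqmax _ hl hlκ
    have h2 : q ≤ Nat.lcm p q := Nat.le_of_dvd
      (Nat.lcm_pos (hpos p hp) hq0) (Nat.dvd_lcm_right p q)
    have : Nat.lcm p q = q := le_antisymm h1 h2
    calc p ∣ Nat.lcm p q := Nat.dvd_lcm_left p q
      _ = q := this
  -- step A : for d ∣ κ, a d = a (gcd q d)
  have hstepA : ∀ d ∈ κ.divisors, a d = a (q.gcd d) := by
    intro d hd
    obtain ⟨hdκ, -⟩ := Nat.mem_divisors.1 hd
    have hd0 : 0 < d := Nat.pos_of_dvd_of_pos hdκ hκ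
    have hg0 : 0 < q.gcd d := Nat.gcd_pos_of_pos_left d hq0
    have key : qN d = qN (q.gcd d) := by
      refine le_antisymm ?_ ?_
      · refine hqN_max _ _ (hqN_mem d) (Nat.dvd_gcd ?_ (hqN_dvd d))
        exact hdvdq _ (hqN_mem d) ((hqN_dvd d).trans hdκ)
      · exact hqN_max _ _ (hqN_mem _) ((hqN_dvd _).trans (Nat.gcd_dvd_right q d))
    rw [haq d hd0, haq (q.gcd d) hg0, key]
  obtain ⟨m, hm⟩ : q ∣ κ := hqdvd
  have hqd : q ∣ κ := ⟨m, hm⟩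
  have hm0 : 0 < m := by
    rcases Nat.eq_zero_or_pos m with rfl | h
    · simp at hm; omega
    · exact h
  rw [hb κ hκ, hb q hq0]
  have e1 : ∑ d ∈ κ.divisors, (Nat.totient (κ / d) : ℝ) * a d
      = ∑ d ∈ κ.divisors, (Nat.totient (κ / d) : ℝ) * a (q.gcd d) :=
    Finset.sum_congr rfl fun d hd => by rw [hstepA d hd]
  rw [e1, ← sum_gcd_range κ hκ (fun k => a (q.gcd k))]
  have e2 : ∀ k, q.gcd (κ.gcd k) = q.gcd k := fun k => by
    rw [← Nat.gcd_assoc, Nat.gcd_eq_left hqd]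
  simp only [e2]
  have hκm : κ = m * q := by rw [hm, Nat.mul_comm]
  rw [hκm, sum_gcd_periodic q m a, sum_gcd_range q hq0 a]
  have hq0' : (q : ℝ) ≠ 0 := Nat.cast_ne_zero.2 hq0.ne'
  have hm0' : (m : ℝ) ≠ 0 := Nat.cast_ne_zero.2 hm0.ne'
  push_cast
  field_simp
end

section
/- Let N be a finite set of positive integers with 1 ∈ N, closed under least common multiples. Then every sequence a : ℕ≥1 → ℝ subordinated to N admits a unique family of real coefficients (c_q)_{q ∈ N} such that a(κ) = Σ_{q ∈ N, q | κ} c_q for every positive integer κ. In other words, the sequences δ(q), q ∈ N, defined by δ(q)(κ) = 1 if q | κ and δ(q)(κ) = 0 otherwise, form a basis of the real vector space of sequences subordinated to N. -/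
noncomputable def myc (N : Finset ℕ) (a : ℕ → ℝ) : ℕ → ℝ
  | q => a q - ∑ q' ∈ (N.filter (fun q' => q' ∣ q ∧ q' < q)).attach,
      myc N a q'.1
  termination_by q => q
  decreasing_by
    have h := q'.2
    simp only [Finset.mem_filter] at h
    exact h.2.2

lemma myc_spec (N : Finset ℕ) (a : ℕ → ℝ) (q : ℕ) :
    myc N a q = a q - ∑ q' ∈ N.filter (fun q' => q' ∣ q ∧ q' < q), myc N a q' := by
  rw [myc, Finset.sum_attach]

lemma filter_split (N : Finset ℕ) (q : ℕ) (hq : q ∈ N) (hqpos : 0 < q) :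
    N.filter (fun q' => q' ∣ q) =
      insert q (N.filter (fun q' => q' ∣ q ∧ q' < q)) := by
  ext x
  simp only [Finset.mem_filter, Finset.mem_insert]
  constructor
  · rintro ⟨hxN, hxd⟩
    rcases lt_or_eq_of_le (Nat.le_of_dvd hqpos hxd) with h | h
    · exact Or.inr ⟨hxN, hxd, h⟩
    · exact Or.inl h
  · rintro (rfl | ⟨hxN, hxd, _⟩)
    · exact ⟨hq, dvd_rfl⟩
    · exact ⟨hxN, hxd⟩

lemma sum_myc (N : Finset ℕ) (a : ℕ → ℝ) (q : ℕ) (hq : q ∈ N) (hqpos : 0 < q) :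
    ∑ q' ∈ N.filter (fun q' => q' ∣ q), myc N a q' = a q := by
  rw [filter_split N q hq hqpos, Finset.sum_insert (by simp), myc_spec]
  ring

theorem stmt_7 (N : Finset ℕ) (hpos : ∀ q ∈ N, 0 < q) (h1 : 1 ∈ N)
    (hlcm : ∀ q ∈ N, ∀ q' ∈ N, Nat.lcm q q' ∈ N)
    (a : ℕ → ℝ) (ha : Subordinated N a) :
    ∃ c : ℕ → ℝ,
      (∀ κ, 0 < κ → a κ = ∑ q ∈ N.filter (fun q => q ∣ κ), c q) ∧
      ∀ c' : ℕ → ℝ,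
        (∀ κ, 0 < κ → a κ = ∑ q ∈ N.filter (fun q => q ∣ κ), c' q) →
        ∀ q ∈ N, c' q = c q := by
  refine ⟨myc N a, ?_, ?_⟩
  · intro κ hκ
    have hne : (N.filter (fun q' => q' ∣ κ)).Nonempty :=
      ⟨1, Finset.mem_filter.mpr ⟨h1, one_dvd _⟩⟩
    set Q := (N.filter (fun q' => q' ∣ κ)).max' hne with hQdef
    have hQmem := (N.filter (fun q' => q' ∣ κ)).max'_mem hne
    rw [Finset.mem_filter] at hQmem
    obtain ⟨hQN, hQd⟩ := hQmem
    have hQpos : 0 < Q := hpos Q hQN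
    have hmax : ∀ q' ∈ N, q' ∣ κ → q' ≤ Q := by
      intro x hxN hxd
      exact Finset.le_max' (N.filter (fun q' => q' ∣ κ)) x (Finset.mem_filter.mpr ⟨hxN, hxd⟩)
    have hfe : N.filter (fun q' => q' ∣ κ) = N.filter (fun q' => q' ∣ Q) := by
      ext x
      simp only [Finset.mem_filter]
      constructor
      · rintro ⟨hxN, hxd⟩
        refine ⟨hxN, ?_⟩
        have hl : Nat.lcm x Q ∈ N := hlcm x hxN Q hQN
        have hld : Nat.lcm x Q ∣ κ := Nat.lcm_dvd hxd hQd
        have h1l : Nat.lcm x Q ≤ Q := hmax _ hl hld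
        have h2l : Q ≤ Nat.lcm x Q := Nat.le_of_dvd (hpos _ hl) (Nat.dvd_lcm_right _ _)
        have : Nat.lcm x Q = Q := le_antisymm h1l h2l
        exact this ▸ Nat.dvd_lcm_left x Q
      · rintro ⟨hxN, hxd⟩
        exact ⟨hxN, hxd.trans hQd⟩
    rw [ha κ hκ Q hQN hQd hmax, hfe, sum_myc N a Q hQN hQpos]
  · intro c' hc' q hq
    induction q using Nat.strong_induction_on with
    | _ q ih =>
      have hqpos : 0 < q := hpos q hq
      have h1' : a q = ∑ q' ∈ N.filter (fun q' => q' ∣ q), c' q' := hc' q hqpos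
      rw [filter_split N q hq hqpos, Finset.sum_insert (by simp)] at h1'
      have h2' : a q = myc N a q + ∑ q' ∈ N.filter (fun q' => q' ∣ q ∧ q' < q), myc N a q' := by
        rw [myc_spec]; ring
      have hsum : ∑ q' ∈ N.filter (fun q' => q' ∣ q ∧ q' < q), c' q'
          = ∑ q' ∈ N.filter (fun q' => q' ∣ q ∧ q' < q), myc N a q' := by
        apply Finset.sum_congr rfl
        intro x hx
        simp only [Finset.mem_filter] at hx
        exact ih x hx.2.2 hx.1
      have := h1'.symm.trans h2'
      rw [hsum] at this
      linarith
end

section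
/- Let N be a finite set of positive integers with 1 ∈ N, closed under least common multiples, and let a : ℕ≥1 → ℝ be a sequence subordinated to N such that for every positive integer κ the number (1/κ) · Σ_{d | κ} φ(κ/d) · a(d) is an integer. Then there exist integers (c_q)_{q ∈ N} such that a(κ) = Σ_{q ∈ N, q | κ} c_q · q for every positive integer κ; that is, a is an integral linear combination of the sequences q·δ(q), q ∈ N. -/
open Finset Nat

lemma sum_totient_div_filter_dvd {p q : ℕ} (hq : q ≠ 0) (hpq : p ∣ q) :
    ∑ d ∈ q.divisors with p ∣ d, φ (q / d) = q / p := by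
  have hp : p ≠ 0 := ne_zero_of_dvd_ne_zero hq hpq
  have himage : {d ∈ q.divisors | p ∣ d} = (q / p).divisors.image (p * ·) := by
    ext d
    simp only [mem_filter, mem_image, mem_divisors]
    constructor
    · rintro ⟨⟨hdq, -⟩, e, rfl⟩
      exact ⟨e, ⟨(Nat.dvd_div_iff_mul_dvd hpq).2 hdq, Nat.div_ne_zero_iff_of_dvd hpq |>.2 ⟨hq, hp⟩⟩, rfl⟩
    · rintro ⟨e, ⟨he, -⟩, rfl⟩
      exact ⟨⟨(Nat.dvd_div_iff_mul_dvd hpq).1 he, hq⟩, dvd_mul_right p e⟩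
  rw [himage, sum_image fun x _ y _ h => Nat.eq_of_mul_eq_mul_left (pos_of_ne_zero hp) h]
  simp_rw [← Nat.div_div_eq_div_mul]
  rw [Nat.sum_div_divisors, Nat.sum_totient]

lemma sum_totient_smul_sum_filter_dvd {G : Type*} [AddCommMonoid G] (N : Finset ℕ) (b : ℕ → G)
    {q : ℕ} (hq : q ≠ 0) :
    ∑ d ∈ q.divisors, φ (q / d) • ∑ p ∈ N with p ∣ d, b p = ∑ p ∈ N with p ∣ q, (q / p) • b p := by
  simp_rw [smul_sum, sum_filter]
  rw [sum_comm]
  refine sum_congr rfl fun p _ => ?_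
  split_ifs with hpq
  · rw [← sum_filter, ← sum_smul, sum_totient_div_filter_dvd hq hpq]
  · refine sum_eq_zero fun d hd => if_neg fun hpd => hpq (hpd.trans (Nat.dvd_of_mem_divisors hd))

lemma filter_dvd_eq_insert_filter_dvd_lt {N : Finset ℕ} {q : ℕ} (hq : q ≠ 0) (hqN : q ∈ N) :
    {p ∈ N | p ∣ q} = insert q {p ∈ N | p ∣ q ∧ p < q} := by
  ext p
  simp only [mem_filter, mem_insert]
  constructor
  · rintro ⟨hpN, hpq⟩
    rcases (Nat.le_of_dvd (pos_of_ne_zero hq) hpq).eq_or_lt with rfl | hlt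
    · exact .inl rfl
    · exact .inr ⟨hpN, hpq, hlt⟩
  · rintro (rfl | ⟨hpN, hpq, -⟩)
    exacts [⟨hqN, dvd_rfl⟩, ⟨hpN, hpq⟩]

lemma mem_of_forall_sum_filter_dvd_mem {G : Type*} [AddCommGroup G] (S : AddSubgroup G)
    {N : Finset ℕ} {b : ℕ → G} (hS : ∀ q ∈ N, q ≠ 0 → ∑ p ∈ N with p ∣ q, b p ∈ S) :
    ∀ q ∈ N, q ≠ 0 → b q ∈ S := by
  intro q
  induction q using Nat.strong_induction_on with
  | _ q ih =>
    intro hqN hq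
    have hsum := hS q hqN hq
    rw [filter_dvd_eq_insert_filter_dvd_lt hq hqN, sum_insert (by simp)] at hsum
    have hlower : ∑ p ∈ N with p ∣ q ∧ p < q, b p ∈ S := by
      refine S.sum_mem fun p hp => ?_
      obtain ⟨hpN, hpq, hlt⟩ := mem_filter.1 hp
      exact ih p hlt hpN (ne_zero_of_dvd_ne_zero hq hpq)
    simpa using S.sub_mem hsum hlower

lemma exists_mem_dvd_forall_dvd {N : Finset ℕ} (h1 : 1 ∈ N)
    (hlcm : ∀ q ∈ N, ∀ q' ∈ N, Nat.lcm q q' ∈ N) {κ : ℕ} (hκ : κ ≠ 0) :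
    ∃ M ∈ N, M ∣ κ ∧ ∀ q ∈ N, q ∣ κ → q ∣ M := by
  have hne : {p ∈ N | p ∣ κ}.Nonempty := ⟨1, mem_filter.2 ⟨h1, one_dvd κ⟩⟩
  obtain ⟨hMN, hMκ⟩ := mem_filter.1 (max'_mem _ hne)
  refine ⟨_, hMN, hMκ, fun q hqN hqκ => ?_⟩
  set M := max' _ hne
  have hlcmκ : Nat.lcm q M ∣ κ := Nat.lcm_dvd hqκ hMκ
  -- the maximal divisor absorbs `lcm q M`, which is again in `N` and divides `κ`
  have hlcm_le : Nat.lcm q M ≤ M := le_max' _ _ (mem_filter.2 ⟨hlcm q hqN M hMN, hlcmκ⟩)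
  have hlcm_eq : Nat.lcm q M = M := le_antisymm hlcm_le
    (Nat.le_of_dvd (pos_of_dvd_of_pos hlcmκ (pos_of_ne_zero hκ)) (Nat.dvd_lcm_right q M))
  exact hlcm_eq ▸ Nat.dvd_lcm_left q M

section moebiusCoeff

variable {G : Type*} [AddCommGroup G]

noncomputable def moebiusCoeff (N : Finset ℕ) (a : ℕ → G) (q : ℕ) : G :=
  a q - ∑ p ∈ {p ∈ N | p ∣ q ∧ p < q}.attach, moebiusCoeff N a p.1
termination_by q
decreasing_by exact (mem_filter.1 p.2).2.2

lemma moebiusCoeff_eq (N : Finset ℕ) (a : ℕ → G) (q : ℕ) :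
    moebiusCoeff N a q = a q - ∑ p ∈ N with p ∣ q ∧ p < q, moebiusCoeff N a p := by
  rw [moebiusCoeff, sum_attach]

lemma sum_moebiusCoeff {N : Finset ℕ} (a : ℕ → G) {q : ℕ} (hq : q ≠ 0) (hqN : q ∈ N) :
    ∑ p ∈ N with p ∣ q, moebiusCoeff N a p = a q := by
  rw [filter_dvd_eq_insert_filter_dvd_lt hq hqN, sum_insert (by simp), moebiusCoeff_eq]
  abel

end moebiusCoeff

lemma Subordinated.eq_sum_moebiusCoeff {N : Finset ℕ} {a : ℕ → ℝ} (ha : Subordinated N a)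
    (h1 : 1 ∈ N) (hlcm : ∀ q ∈ N, ∀ q' ∈ N, Nat.lcm q q' ∈ N) {κ : ℕ} (hκ : κ ≠ 0) :
    a κ = ∑ p ∈ N with p ∣ κ, moebiusCoeff N a p := by
  obtain ⟨M, hMN, hMκ, hdvdM⟩ := exists_mem_dvd_forall_dvd h1 hlcm hκ
  have hM : M ≠ 0 := ne_zero_of_dvd_ne_zero hκ hMκ
  have hfilter : {p ∈ N | p ∣ κ} = {p ∈ N | p ∣ M} := filter_congr fun p hpN =>
    ⟨hdvdM p hpN, (·.trans hMκ)⟩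
  rw [ha κ (pos_of_ne_zero hκ) M hMN hMκ fun q hqN hqκ => Nat.le_of_dvd (pos_of_ne_zero hM)
    (hdvdM q hqN hqκ), hfilter, sum_moebiusCoeff a hM hMN]

lemma Subordinated.totient_average_eq_sum_moebiusCoeff_div {N : Finset ℕ} {a : ℕ → ℝ}
    (ha : Subordinated N a) (h1 : 1 ∈ N) (hlcm : ∀ q ∈ N, ∀ q' ∈ N, Nat.lcm q q' ∈ N)
    {κ : ℕ} (hκ : κ ≠ 0) :
    1 / (κ : ℝ) * ∑ d ∈ κ.divisors, (φ (κ / d) : ℝ) * a d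
      = ∑ p ∈ N with p ∣ κ, moebiusCoeff N a p / p := by
  have hsum : ∑ d ∈ κ.divisors, (φ (κ / d) : ℝ) * a d
      = ∑ d ∈ κ.divisors, φ (κ / d) • ∑ p ∈ N with p ∣ d, moebiusCoeff N a p := by
    refine sum_congr rfl fun d hd => ?_
    rw [nsmul_eq_mul, ← ha.eq_sum_moebiusCoeff h1 hlcm (pos_of_mem_divisors hd).ne']
  rw [hsum, sum_totient_smul_sum_filter_dvd N _ hκ, mul_sum]
  refine sum_congr rfl fun p hp => ?_
  have hpκ := (mem_filter.1 hp).2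
  have hp0 : (p : ℝ) ≠ 0 := cast_ne_zero.2 (ne_zero_of_dvd_ne_zero hκ hpκ)
  rw [nsmul_eq_mul, Nat.cast_div hpκ hp0]
  field_simp

theorem stmt_10_general (N : Finset ℕ) (h1 : 1 ∈ N)
    (hlcm : ∀ q ∈ N, ∀ q' ∈ N, Nat.lcm q q' ∈ N)
    (a : ℕ → ℝ) (ha : Subordinated N a)
    (hint : ∀ κ : ℕ, 0 < κ → ∃ z : ℤ,
      (1 / (κ : ℝ)) * ∑ d ∈ κ.divisors, (Nat.totient (κ / d) : ℝ) * a d = (z : ℝ)) :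
    ∃ c : ℕ → ℤ, ∀ κ, 0 < κ →
      a κ = ∑ q ∈ N.filter (fun q => q ∣ κ), (c q : ℝ) * (q : ℝ) := by
  have hintegral : ∀ q ∈ N, q ≠ 0 → moebiusCoeff N a q / q ∈ (Int.castAddHom ℝ).range := by
    refine mem_of_forall_sum_filter_dvd_mem _ fun q _ hq => ?_
    obtain ⟨z, hz⟩ := hint q (pos_of_ne_zero hq)
    exact ⟨z, by rw [← ha.totient_average_eq_sum_moebiusCoeff_div h1 hlcm hq, hz]; rfl⟩
  refine ⟨fun q => ⌊moebiusCoeff N a q / q⌋, fun κ hκ => ?_⟩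
  rw [ha.eq_sum_moebiusCoeff h1 hlcm hκ.ne']
  refine sum_congr rfl fun q hq => ?_
  obtain ⟨hqN, hqκ⟩ := mem_filter.1 hq
  have hq0 : q ≠ 0 := ne_zero_of_dvd_ne_zero hκ.ne' hqκ
  obtain ⟨z, hz : (z : ℝ) = moebiusCoeff N a q / q⟩ := hintegral q hqN hq0
  show _ = (⌊moebiusCoeff N a q / q⌋ : ℝ) * q
  rw [← hz, Int.floor_intCast, hz, div_mul_cancel₀ _ (cast_ne_zero.2 hq0)]

theorem stmt_10 (N : Finset ℕ) (hpos : ∀ q ∈ N, 0 < q) (h1 : 1 ∈ N)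
    (hlcm : ∀ q ∈ N, ∀ q' ∈ N, Nat.lcm q q' ∈ N)
    (a : ℕ → ℝ) (ha : Subordinated N a)
    (hint : ∀ κ : ℕ, 0 < κ → ∃ z : ℤ,
      (1 / (κ : ℝ)) * ∑ d ∈ κ.divisors, (Nat.totient (κ / d) : ℝ) * a d = (z : ℝ)) :
    ∃ c : ℕ → ℤ, ∀ κ, 0 < κ →
      a κ = ∑ q ∈ N.filter (fun q => q ∣ κ), (c q : ℝ) * (q : ℝ) :=
  stmt_10_general N h1 hlcm a ha hint
end

section
/- Let I be a finite set indexing a collection of periodic orbits, equipped with: a positive integer τ_i (the minimal period), an integer e_i (the index of the orbit), and a Boolean flag odd_i for each i ∈ I. For a positive integer κ, define the Lefschetz-type number L(κ) = Σ_{i ∈ I, τ_i | κ} τ_i · s_i(κ) · e_i, where s_i(κ) = (-1)^(1 + κ/τ_i) if odd_i holds and s_i(κ) = 1 otherwise. Call i ∈ I good for κ if τ_i | κ and either odd_i fails or κ/τ_i is odd. Then for every positive integer κ: κ · Σ_{i good for κ} e_i = Σ_{d | κ} φ(κ/d) · L(d), the outer sum ranging over the positive divisors d of κ. (This is the combinatorial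 content of the formula I_κ(F) = (1/κ) Σ_{d|κ} φ(κ/d) I(F^d) relating the iterated index, which counts good κ-periodic orbits with their indices, to the Lefschetz numbers of the iterations, which count κ-periodic points with their indices.) -/
open Finset

private lemma div_sum_bij (κ τ : ℕ) (hτ : 0 < τ) (hτκ : τ ∣ κ) (hκ : 0 < κ)
    (f : ℕ → ℤ) :
    ∑ d ∈ κ.divisors.filter (fun d => τ ∣ d), f d
      = ∑ m ∈ (κ / τ).divisors, f (τ * m) := by
  apply Finset.sum_nbij' (fun d => d / τ) (fun m => τ * m)
  · intro d hd
    simp only [mem_filter, Nat.mem_divisors] at hd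
    obtain ⟨⟨hdκ, hκ0⟩, hτd⟩ := hd
    rw [Nat.mem_divisors]
    obtain ⟨a, ha⟩ := hτd
    obtain ⟨c, hc⟩ := hdκ
    subst ha
    refine ⟨⟨c, ?_⟩, (Nat.div_pos (Nat.le_of_dvd hκ hτκ) hτ).ne'⟩
    rw [Nat.mul_div_cancel_left _ hτ, hc, mul_assoc, Nat.mul_div_cancel_left _ hτ]
  · intro m hm
    rw [Nat.mem_divisors] at hm
    simp only [mem_filter, Nat.mem_divisors]
    refine ⟨⟨?_, hκ.ne'⟩, Dvd.intro m rfl⟩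
    obtain ⟨c, hc⟩ := hm.1
    exact ⟨c, by rw [mul_assoc, ← hc, Nat.mul_div_cancel' hτκ]⟩
  · intro d hd
    simp only [mem_filter] at hd
    exact Nat.mul_div_cancel' hd.2
  · intro m hm
    exact Nat.mul_div_cancel_left m hτ
  · intro d hd
    simp only [mem_filter] at hd
    rw [Nat.mul_div_cancel' hd.2]

private lemma tot_sum (n : ℕ) : ∑ m ∈ n.divisors, (Nat.totient (n / m) : ℤ) = n := by
  have h := Nat.sum_div_divisors n Nat.totient
  rw [Nat.sum_totient] at h
  exact_mod_cast congrArg (Nat.cast : ℕ → ℤ) h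

private lemma key_sum (n : ℕ) (hn : 0 < n) :
    ∑ m ∈ n.divisors, (Nat.totient (n / m) : ℤ) * (-1) ^ (1 + m)
      = if Odd n then (n : ℤ) else 0 := by
  have h2 : ∑ m ∈ n.divisors, (Nat.totient (n / m) : ℤ) * (-1) ^ (1 + m)
      = (∑ m ∈ n.divisors, (Nat.totient (n / m) : ℤ))
        - ∑ m ∈ n.divisors.filter (fun m => 2 ∣ m), 2 * (Nat.totient (n / m) : ℤ) := by
    rw [sum_filter, ← sum_sub_distrib]
    apply sum_congr rfl
    intro m _
    rcases Nat.even_or_odd m with hm | hm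
    · have he : (-1 : ℤ) ^ (1 + m) = -1 := by
        have : Odd (1 + m) := by rw [add_comm]; exact hm.add_one
        exact this.neg_one_pow
      rw [he, if_pos hm.two_dvd]; ring
    · have hm' := Nat.odd_iff.mp hm
      have he : (-1 : ℤ) ^ (1 + m) = 1 := by
        have : Even (1 + m) := by rw [add_comm]; exact hm.add_one
        exact this.neg_one_pow
      rw [he, if_neg (by omega)]; ring
  by_cases hodd : Odd n
  · have hempty : n.divisors.filter (fun m => 2 ∣ m) = ∅ := by
      rw [filter_eq_empty_iff]
      intro m hm h2m
      have h1 := h2m.trans (Nat.dvd_of_mem_divisors hm)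
      have h2 := Nat.odd_iff.mp hodd
      omega
    rw [h2, hempty, sum_empty, tot_sum, sub_zero, if_pos hodd]
  · have h2n : (2 : ℕ) ∣ n := by
      have := Nat.not_odd_iff_even.mp hodd
      exact this.two_dvd
    have h3 := div_sum_bij n 2 two_pos h2n hn (fun d => 2 * (Nat.totient (n / d) : ℤ))
    rw [h2, h3, tot_sum, if_neg hodd]
    simp only [← Nat.div_div_eq_div_mul]
    rw [← Finset.mul_sum, tot_sum]
    have : ((n / 2 : ℕ) : ℤ) * 2 = n := by
      exact_mod_cast congrArg (Nat.cast : ℕ → ℤ) (Nat.div_mul_cancel h2n)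
    linarith

theorem stmt_11 {ι : Type*} (I : Finset ι) (τ : ι → ℕ) (e : ι → ℤ) (odd : ι → Bool)
    (hτ : ∀ i ∈ I, 0 < τ i)
    (s : ι → ℕ → ℤ)
    (hs : ∀ i κ, s i κ = if odd i then (-1 : ℤ) ^ (1 + κ / τ i) else 1)
    (L : ℕ → ℤ)
    (hL : ∀ κ, L κ = ∑ i ∈ I.filter (fun i => τ i ∣ κ), (τ i : ℤ) * s i κ * e i)
    (κ : ℕ) (hκ : 0 < κ) :
    (κ : ℤ) * ∑ i ∈ I.filter (fun i => τ i ∣ κ ∧ (odd i = false ∨ Odd (κ / τ i))), e i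
      = ∑ d ∈ κ.divisors, (Nat.totient (κ / d) : ℤ) * L d := by
  classical
  have hrhs : ∑ d ∈ κ.divisors, (Nat.totient (κ / d) : ℤ) * L d
      = ∑ i ∈ I, ∑ d ∈ κ.divisors.filter (fun d => τ i ∣ d),
          (Nat.totient (κ / d) : ℤ) * ((τ i : ℤ) * s i d * e i) := by
    simp_rw [hL, Finset.mul_sum, Finset.sum_filter]
    exact Finset.sum_comm
  have hinner : ∀ i ∈ I,
      ∑ d ∈ κ.divisors.filter (fun d => τ i ∣ d),
          (Nat.totient (κ / d) : ℤ) * ((τ i : ℤ) * s i d * e i)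
        = if τ i ∣ κ ∧ (odd i = false ∨ Odd (κ / τ i)) then (κ : ℤ) * e i else 0 := by
    intro i hi
    by_cases hd : τ i ∣ κ
    · rw [div_sum_bij κ (τ i) (hτ i hi) hd hκ]
      have hmdiv : ∀ m : ℕ, (τ i * m) / τ i = m := fun m => Nat.mul_div_cancel_left m (hτ i hi)
      have hκτ : ((κ / τ i : ℕ) : ℤ) * (τ i : ℤ) = κ := by
        exact_mod_cast congrArg (Nat.cast : ℕ → ℤ) (Nat.div_mul_cancel hd)
      have hpos : 0 < κ / τ i := Nat.div_pos (Nat.le_of_dvd hκ hd) (hτ i hi)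
      cases hodd : odd i with
      | false =>
        have hsimp : ∀ m : ℕ, s i (τ i * m) = 1 := fun m => by rw [hs, hodd]; simp
        simp only [hsimp, mul_one, ← Nat.div_div_eq_div_mul]
        rw [← Finset.sum_mul, tot_sum, if_pos ⟨hd, Or.inl (by simp)⟩]
        rw [← hκτ]; ring
      | true =>
        have hsimp : ∀ m : ℕ, s i (τ i * m) = (-1 : ℤ) ^ (1 + m) := fun m => by
          rw [hs, hodd, hmdiv]; simp
        simp only [hsimp, ← Nat.div_div_eq_div_mul]
        have : ∑ m ∈ (κ / τ i).divisors,
            (Nat.totient (κ / τ i / m) : ℤ) * ((τ i : ℤ) * (-1) ^ (1 + m) * e i)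
            = (∑ m ∈ (κ / τ i).divisors,
                (Nat.totient (κ / τ i / m) : ℤ) * (-1) ^ (1 + m)) * ((τ i : ℤ) * e i) := by
          rw [Finset.sum_mul]
          exact Finset.sum_congr rfl fun m _ => by ring
        rw [this, key_sum _ hpos]
        by_cases hko : Odd (κ / τ i)
        · rw [if_pos hko, if_pos ⟨hd, Or.inr hko⟩, ← hκτ]; ring
        · rw [if_neg hko, if_neg (by simp [hodd, hko]), zero_mul]
    · have hempty : κ.divisors.filter (fun d => τ i ∣ d) = ∅ := by
        rw [filter_eq_empty_iff]
        intro d hdm hτd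
        exact hd (hτd.trans (Nat.dvd_of_mem_divisors hdm))
      rw [hempty, sum_empty, if_neg (fun h => hd h.1)]
  rw [hrhs, Finset.mul_sum, Finset.sum_filter]
  exact Finset.sum_congr rfl fun i hi => (hinner i hi).symm
end
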